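/- arXiv:1604.00612 — 2 statements merged into one kernel-verified Lean document; each statement's English description precedes it below -/
import Mathlib

section
/- Let V be a finite type and E : V → V → Prop a relation with no directed cycles (¬ Relation.TransGen E v v for every v). If E is strongly reduced, then E is reduced. -/
/-- A directed path of length `k` in `(V, E)`: a map `p : Fin (k+1) → V` with
`E (p i) (p (i+1))` for all `i < k`. -/
def IsDirPath {V : Type*} (E : V → V → Prop) (k : ℕ) (p : Fin (k + 1) → V) : Prop :=
  ∀ i : Fin k, E (p i.castSucc) (p i.succ)

/-- A directed path of length `k` from `v` to `w`. -/
def IsDirPathFromTo {V : Type*} (E : V → V → Prop) (k : ℕ) (p : Fin (k + 1) → V)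
    (v w : V) : Prop :=
  p 0 = v ∧ p (Fin.last k) = w ∧ IsDirPath E k p

/-- `E` is reduced: for every pair of vertices `v, w` with `w` reachable from `v`, there is
a directed path from `v` to `w` whose vertex set contains the vertex set of every directed
path from `v` to `w`. -/
def Reduced {V : Type*} (E : V → V → Prop) : Prop :=
  ∀ v w : V, Relation.TransGen E v w →
    ∃ (m : ℕ) (γM : Fin (m + 1) → V), IsDirPathFromTo E m γM v w ∧
      ∀ (k : ℕ) (γ : Fin (k + 1) → V), IsDirPathFromTo E k γ v w →
        Set.range γ ⊆ Set.range γM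

/-- A topological order of `(V, E)`: an injective map `f : V → ℕ` with `f u < f v`
whenever `E u v`. -/
def IsTopologicalOrder {V : Type*} (E : V → V → Prop) (f : V → ℕ) : Prop :=
  Function.Injective f ∧ ∀ u v : V, E u v → f u < f v

/-- `L` is the list of the elements of `S`, sorted in strictly increasing order of `f`. -/
def IsSortedListOf {V : Type*} (f : V → ℕ) (S : Set V) (L : List V) : Prop :=
  (∀ x : V, x ∈ L ↔ x ∈ S) ∧ L.Pairwise fun x y => f x < f y

/-- The list `L` is a directed path from `v` to `w`: its first element is `v`, its last
element is `w`, and consecutive elements are related by `E`. -/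
def IsDirPathList {V : Type*} (E : V → V → Prop) (v w : V) (L : List V) : Prop :=
  L.head? = some v ∧ L.getLast? = some w ∧ L.Chain' E

/-- `E` is strongly reduced: for every topological order `f`, every pair of vertices `v, w`
and every two directed paths `γ, γ'` from `v` to `w`, the list of vertices of the union of
the vertex sets of `γ` and `γ'`, sorted in strictly increasing order of `f`, is a directed
path from `v` to `w`. -/
def StronglyReduced {V : Type*} (E : V → V → Prop) : Prop :=
  ∀ f : V → ℕ, IsTopologicalOrder E f →
    ∀ (v w : V) (k k' : ℕ) (γ : Fin (k + 1) → V) (γ' : Fin (k' + 1) → V),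
      IsDirPathFromTo E k γ v w → IsDirPathFromTo E k' γ' v w →
        ∀ L : List V, IsSortedListOf f (Set.range γ ∪ Set.range γ') L →
          IsDirPathList E v w L

/-!
Merging two directed paths from `v` to `w` along a topological order (which exists because `E`
is acyclic) yields, by strong reducedness, a directed path whose vertex set is the union of
theirs. So the vertex sets of the paths from `v` to `w` form a directed family of subsets of the
finite type `V`; such a family has a member containing all the others, and a path realising it
is the required `γ_M`.
-/

section

variable {V : Type*} {E : V → V → Prop}

theorem IsDirPathList.exists_isDirPathFromTo {v w : V} {L : List V}
    (hL : IsDirPathList E v w L) :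
    ∃ (k : ℕ) (γ : Fin (k + 1) → V), IsDirPathFromTo E k γ v w ∧ Set.range γ = {x | x ∈ L} := by
  obtain ⟨hhead, hlast, hchain⟩ := hL
  obtain ⟨k, hk⟩ : ∃ k, L.length = k + 1 :=
    Nat.exists_eq_add_one_of_ne_zero fun h => by simp [List.length_eq_zero_iff.1 h] at hhead
  refine ⟨k, L.get ∘ finCongr hk.symm, ⟨?_, ?_, fun i => ?_⟩, ?_⟩
  · simpa [List.head?_eq_getElem?, hk] using hhead
  · simpa [List.getLast?_eq_getElem?, hk] using hlast
  · simpa using List.isChain_iff_getElem.1 hchain i (by omega)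
  · rw [(finCongr hk.symm).surjective.range_comp, Set.range_list_get]

theorem exists_isDirPathFromTo_of_reflTransGen {v w : V} (h : Relation.ReflTransGen E v w) :
    ∃ (k : ℕ) (γ : Fin (k + 1) → V), IsDirPathFromTo E k γ v w := by
  obtain ⟨l, hchain, hlast⟩ := List.exists_isChain_cons_of_relationReflTransGen h
  have hpath : IsDirPathList E v w (v :: l) :=
    ⟨rfl, by simp [← hlast, List.getLast?_eq_some_getLast], hchain⟩
  obtain ⟨k, γ, hγ, -⟩ := hpath.exists_isDirPathFromTo
  exact ⟨k, γ, hγ⟩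

theorem Finite.exists_injective_strictMono_nat (α : Type*) [PartialOrder α] [Finite α] :
    ∃ f : α → ℕ, Function.Injective f ∧ StrictMono f := by
  let _ : Fintype (LinearExtension α) := Fintype.ofFinite α
  let e := Fintype.orderIsoFinOfCardEq (LinearExtension α) rfl
  have hinj : Function.Injective (toLinearExtension : α →o LinearExtension α) := fun _ _ h => h
  exact ⟨fun a => e.symm (toLinearExtension a), Fin.val_injective.comp (e.symm.injective.comp hinj),
    Fin.val_strictMono.comp <| e.symm.strictMono.comp <|
      toLinearExtension.monotone.strictMono_of_injective hinj⟩

theorem exists_isTopologicalOrder [Finite V] (hacyc : ∀ v : V, ¬Relation.TransGen E v v) :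
    ∃ f : V → ℕ, IsTopologicalOrder E f := by
  let : PartialOrder V :=
    { le := Relation.ReflTransGen E
      le_refl := fun _ => .refl
      le_trans := fun _ _ _ => .trans
      le_antisymm := fun u v huv hvu => by
        rcases huv.cases_head with rfl | ⟨x, hux, hxv⟩
        · rfl
        · exact (hacyc u (.head' hux (hxv.trans hvu))).elim }
  obtain ⟨f, hinj, hmono⟩ := Finite.exists_injective_strictMono_nat V
  refine ⟨f, hinj, fun u v huv => hmono (lt_of_le_of_ne (.single huv) ?_)⟩
  rintro rfl
  exact hacyc u (.single huv)

theorem Set.Finite.exists_isSortedListOf {f : V → ℕ} (hf : Function.Injective f) {S : Set V}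
    (hS : S.Finite) : ∃ L : List V, IsSortedListOf f S L := by
  let := LinearOrder.lift' f hf
  refine ⟨hS.toFinset.sort, fun x => by simp, ?_⟩
  exact List.sortedLT_iff_pairwise.1 hS.toFinset.sortedLT_sort

theorem StronglyReduced.exists_isDirPathFromTo_range_eq_union (hsr : StronglyReduced E)
    {f : V → ℕ} (hf : IsTopologicalOrder E f) {v w : V} {k k' : ℕ} {γ : Fin (k + 1) → V}
    {γ' : Fin (k' + 1) → V} (hγ : IsDirPathFromTo E k γ v w) (hγ' : IsDirPathFromTo E k' γ' v w) :
    ∃ (m : ℕ) (γU : Fin (m + 1) → V), IsDirPathFromTo E m γU v w ∧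
      Set.range γU = Set.range γ ∪ Set.range γ' := by
  obtain ⟨L, hL⟩ := ((Set.finite_range γ).union (Set.finite_range γ')).exists_isSortedListOf hf.1
  obtain ⟨m, γU, hγU, hrange⟩ := (hsr f hf v w k k' γ γ' hγ hγ' L hL).exists_isDirPathFromTo
  exact ⟨m, γU, hγU, hrange.trans (Set.ext hL.1)⟩

end

theorem stronglyReduced_imp_reduced {V : Type*} [Fintype V] (E : V → V → Prop)
    (hacyc : ∀ v : V, ¬Relation.TransGen E v v)
    (hsr : StronglyReduced E) : Reduced E := by
  obtain ⟨f, hf⟩ := exists_isTopologicalOrder hacyc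
  intro v w hvw
  let P : Set (Set V) := {S | ∃ (k : ℕ) (γ : Fin (k + 1) → V),
    IsDirPathFromTo E k γ v w ∧ Set.range γ = S}
  have hne : P.Nonempty := by
    obtain ⟨k, γ, hγ⟩ := exists_isDirPathFromTo_of_reflTransGen hvw.to_reflTransGen
    exact ⟨_, k, γ, hγ, rfl⟩
  have hdir : DirectedOn (· ⊆ ·) P := by
    rintro _ ⟨k, γ, hγ, rfl⟩ _ ⟨k', γ', hγ', rfl⟩
    obtain ⟨m, γU, hγU, hU⟩ := hsr.exists_isDirPathFromTo_range_eq_union hf hγ hγ'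
    exact ⟨_, ⟨m, γU, hγU, rfl⟩, hU ▸ Set.subset_union_left, hU ▸ Set.subset_union_right⟩
  obtain ⟨_, ⟨m, γM, hγM, rfl⟩, hsub⟩ :=
    hdir.exists_mem_subset_of_finite_of_subset_sUnion hne (Set.toFinite (⋃₀ P)) subset_rfl
  refine ⟨m, γM, hγM, fun k γ hγ => ?_⟩
  exact (Set.subset_sUnion_of_mem (show Set.range γ ∈ P from ⟨k, γ, hγ, rfl⟩)).trans hsub
end

section
/- Let V be a finite type with Fintype.card V = n and E : V → V → Prop a relation with no directed cycles (¬ Relation.TransGen E v v for every v). Suppose the longest directed path in (V,E) has length ℓ with ℓ ≥ 1 (there exists a directed path of length ℓ and no directed path of length ℓ+1). If E is extremely reduced, then the number of edges of (V,E) is at most t(n−ℓ+1, 2) + T(n, ℓ, 1), where t(m, 2) is the number of edges of SimpleGraph.turanGraph m 2 and T(n, ℓ, 1) := C(n, 2) − C(n−ℓ+1, 2). -/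
/-- `E` is extremely reduced: any two non-adjacent vertices with a common ancestor have no
common descendant. -/
def ExtremelyReduced {V : Type*} (E : V → V → Prop) : Prop :=
  ∀ x y : V, ¬E x y → ¬E y x →
    (∃ a : V, Relation.TransGen E a x ∧ Relation.TransGen E a y) →
      ¬∃ b : V, Relation.TransGen E x b ∧ Relation.TransGen E y b

/-- The number of edges of `(V, E)`: the cardinality of the finset of pairs `(u, v)`
with `E u v`. -/
noncomputable def edgeCount {V : Type*} [Fintype V] (E : V → V → Prop) : ℕ :=
  letI := Classical.decPred fun p : V × V => E p.1 p.2
  (Finset.univ.filter fun p : V × V => E p.1 p.2).card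

/-- `t(n, r)`: the number of edges of the Turán graph `SimpleGraph.turanGraph n r`. -/
def turanEdges (n r : ℕ) : ℕ :=
  (SimpleGraph.turanGraph n r).edgeFinset.card

/-- `T(n, ℓ, 1) = C(n, 2) - C(n - ℓ + 1, 2)` (truncated subtraction in `ℕ`). -/
def intervalTuran (n ℓ : ℕ) : ℕ := Nat.choose n 2 - Nat.choose (n - ℓ + 1) 2

/-!
Order `V` by reachability. Since there is no path of length `ℓ + 1`, chains have at most `ℓ + 1`
elements, and being extremely reduced implies that every interval `[a, b]` is a chain. Edges are
comparable pairs, so it suffices to show that a finite poset of this kind with `n` elements has at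
least `C(m, 2) - t(m, 2)` incomparable pairs, where `m = n - ℓ + 1`. As
`C(k + 1, 2) - t(k + 1, 2) = C(k, 2) - t(k, 2) + ⌊k / 2⌋`, induction on `n` reduces this to finding
an element incomparable to at least `⌊(n - ℓ) / 2⌋` others, which is then deleted. Take a minimal
`y` and a maximal `w`: every other element is above `y` or incomparable to it, below `w` or
incomparable to it, and the elements both above `y` and below `w` form the chain `[y, w]`. Hence
`n ≤ ℓ + 1 + d(y) + d(w)`, where `d` counts incomparable elements.
-/

open Finset

theorem Nat.add_one_choose_two (m : ℕ) : (m + 1).choose 2 = m.choose 2 + m := by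
  rw [Nat.choose_succ_succ', Nat.choose_one_right, add_comm]

theorem turanEdges_add_two (m : ℕ) : turanEdges (m + 2) 2 = turanEdges m 2 + m + 1 := by
  simpa [turanEdges] using SimpleGraph.card_edgeFinset_turanGraph_add (n := m) (r := 2)

theorem turanEdges_add_one (m : ℕ) : turanEdges (m + 1) 2 = turanEdges m 2 + (m + 1) / 2 := by
  induction m using Nat.twoStepInduction with
  | zero => decide
  | one => decide
  | more m ih _ =>
    have h₀ := turanEdges_add_two m
    -- `omega` sees `turanEdges (m + 1 + 2) 2` and `turanEdges (m + 3) 2` as unrelated atoms.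
    have h₁ : turanEdges (m + 3) 2 = turanEdges (m + 1) 2 + (m + 1) + 1 :=
      turanEdges_add_two (m + 1)
    change turanEdges (m + 3) 2 = turanEdges (m + 2) 2 + (m + 3) / 2
    omega

theorem add_one_choose_two_add_turanEdges (k : ℕ) :
    (k + 1).choose 2 + turanEdges k 2 = k.choose 2 + turanEdges (k + 1) 2 + k / 2 := by
  rw [Nat.add_one_choose_two, turanEdges_add_one]
  omega

theorem IsChain.card_le_of_strictMono {α β : Type*} [PartialOrder α] [Preorder β] [Fintype β]
    {f : α → β} (hf : StrictMono f) {s : Finset α} (hs : IsChain (· ≤ ·) (s : Set α)) :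
    #s ≤ Fintype.card β := by
  refine card_le_card_of_injOn f (fun _ _ => mem_univ _) fun x hx y hy hfxy => ?_
  by_contra hne
  rcases hs hx hy hne with hxy | hyx
  · exact (hf (hxy.lt_of_ne hne)).ne hfxy
  · exact (hf (hyx.lt_of_ne (Ne.symm hne))).ne' hfxy

section Poset

open scoped Classical

variable {α : Type*} [PartialOrder α] {s : Finset α} {a : α}

theorem card_filter_lt_product_erase (ha : a ∈ s) :
    #{p ∈ s ×ˢ s | p.1 < p.2} =
      #{p ∈ s.erase a ×ˢ s.erase a | p.1 < p.2} + #{v ∈ s | v < a} + #{v ∈ s | a < v} := by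
  simp only [card_filter, sum_product, ← add_sum_erase s _ ha, lt_irrefl, if_false]
  rw [sum_add_distrib]
  ring

theorem card_lt_add_card_gt_add_card_incompRel (ha : a ∈ s) :
    #{v ∈ s | v < a} + #{v ∈ s | a < v} + #{v ∈ s | IncompRel (· ≤ ·) a v} + 1 = #s := by
  have hsplit (v : α) : ((if v < a then 1 else 0) + (if a < v then 1 else 0) +
      (if IncompRel (· ≤ ·) a v then 1 else 0) + if a = v then 1 else 0 : ℕ) = 1 := by
    by_cases hav : a ≤ v <;> by_cases hva : v ≤ a <;>
      simp [IncompRel, hav, hva, lt_iff_le_not_ge, le_antisymm_iff]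
  rw [card_eq_sum_ones s, ← sum_congr rfl fun v _ => hsplit v, sum_add_distrib, sum_add_distrib,
    sum_add_distrib, sum_ite_eq, if_pos ha, card_filter, card_filter, card_filter]

theorem card_le_add_card_incompRel_of_minimal (ha : Minimal (· ∈ s) a) :
    #{v ∈ s | a ≤ v} + #{v ∈ s | IncompRel (· ≤ ·) a v} = #s := by
  convert card_filter_add_card_filter_not (s := s) (fun v => a ≤ v) using 3
  refine filter_congr fun v hv => ⟨fun h => h.1, fun h => ⟨h, fun hva => h ?_⟩⟩
  exact ha.eq_of_le hv hva ▸ le_rfl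

theorem card_ge_add_card_incompRel_of_maximal (ha : Maximal (· ∈ s) a) :
    #{v ∈ s | v ≤ a} + #{v ∈ s | IncompRel (· ≤ ·) a v} = #s := by
  convert card_filter_add_card_filter_not (s := s) (fun v => v ≤ a) using 3
  refine filter_congr fun v hv => ⟨fun h => h.2, fun h => ⟨fun hav => h ?_, h⟩⟩
  exact ha.eq_of_ge hv hav ▸ le_rfl

variable {ℓ : ℕ}

theorem card_le_add_card_incompRel_add_card_incompRel
    (hIcc : ∀ a b : α, IsChain (· ≤ ·) (Set.Icc a b))
    (hchain : ∀ t : Finset α, IsChain (· ≤ ·) (t : Set α) → #t ≤ ℓ + 1)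
    {y w : α} (hy : Minimal (· ∈ s) y) (hw : Maximal (· ∈ s) w) :
    #s ≤ ℓ + 1 + #{v ∈ s | IncompRel (· ≤ ·) y v} + #{v ∈ s | IncompRel (· ≤ ·) w v} := by
  have hup := card_le_add_card_incompRel_of_minimal hy
  have hdown := card_ge_add_card_incompRel_of_maximal hw
  have hunion : #({v ∈ s | y ≤ v} ∪ {v ∈ s | v ≤ w}) ≤ #s :=
    card_le_card (union_subset (filter_subset _ _) (filter_subset _ _))
  have hinter : #({v ∈ s | y ≤ v} ∩ {v ∈ s | v ≤ w}) ≤ ℓ + 1 :=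
    hchain _ ((hIcc y w).mono fun v hv =>
      Set.mem_Icc.2 ⟨(mem_filter.1 (mem_inter.1 hv).1).2, (mem_filter.1 (mem_inter.1 hv).2).2⟩)
  have := card_union_add_card_inter {v ∈ s | y ≤ v} {v ∈ s | v ≤ w}
  omega

theorem exists_le_card_incompRel (hIcc : ∀ a b : α, IsChain (· ≤ ·) (Set.Icc a b))
    (hchain : ∀ t : Finset α, IsChain (· ≤ ·) (t : Set α) → #t ≤ ℓ + 1) (hs : s.Nonempty) :
    ∃ a ∈ s, (#s - ℓ) / 2 ≤ #{v ∈ s | IncompRel (· ≤ ·) a v} := by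
  obtain ⟨y, hy⟩ := s.exists_minimal hs
  obtain ⟨w, hw⟩ := s.exists_maximal hs
  have := card_le_add_card_incompRel_add_card_incompRel hIcc hchain hy hw
  by_contra! h
  have := h y hy.prop
  have := h w hw.prop
  omega

theorem card_filter_lt_add_choose_le (hIcc : ∀ a b : α, IsChain (· ≤ ·) (Set.Icc a b))
    (hchain : ∀ t : Finset α, IsChain (· ≤ ·) (t : Set α) → #t ≤ ℓ + 1) (s : Finset α) :
    #{p ∈ s ×ˢ s | p.1 < p.2} + (#s - ℓ + 1).choose 2 ≤
      turanEdges (#s - ℓ + 1) 2 + (#s).choose 2 := by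
  induction s using Finset.strongInduction with | H s ih =>
  rcases s.eq_empty_or_nonempty with rfl | hs
  · simp
  obtain ⟨a, ha, hdeg⟩ := exists_le_card_incompRel hIcc hchain hs
  have hrec := ih (s.erase a) (erase_ssubset ha)
  rw [card_erase_of_mem ha] at hrec
  have hpairs := card_filter_lt_product_erase ha
  have hsplit := card_lt_add_card_gt_add_card_incompRel ha
  have hchoose := Nat.add_one_choose_two (#s - 1)
  rw [Nat.sub_add_cancel hs.card_pos] at hchoose
  rcases le_or_gt #s ℓ with hle | hlt
  · rw [show #s - ℓ + 1 = 1 by omega]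
    rw [show #s - 1 - ℓ + 1 = 1 by omega] at hrec
    omega
  · have hstep := add_one_choose_two_add_turanEdges (#s - ℓ)
    rw [show #s - 1 - ℓ + 1 = #s - ℓ by omega] at hrec
    omega

end Poset

section DirPath

variable {V : Type*} {E : V → V → Prop}

theorem IsDirPath.snoc {k : ℕ} {p : Fin (k + 1) → V} (hp : IsDirPath E k p) {v : V}
    (hv : E (p (Fin.last k)) v) : IsDirPath E (k + 1) (Fin.snoc p v) := by
  intro i
  induction i using Fin.lastCases with
  | last => simpa using hv
  | cast j =>
    rw [Fin.succ_castSucc, Fin.snoc_castSucc, Fin.snoc_castSucc]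
    exact hp j

theorem exists_height_of_not_isDirPath {ℓ : ℕ}
    (hmax : ¬∃ p : Fin (ℓ + 1 + 1) → V, IsDirPath E (ℓ + 1) p) :
    ∃ h : V → Fin (ℓ + 1), ∀ u v, Relation.TransGen E u v → h u < h v := by
  classical
  let ends (v : V) (k : ℕ) : Prop := ∃ p : Fin (k + 1) → V, IsDirPath E k p ∧ p (Fin.last k) = v
  let height (v : V) : ℕ := Nat.findGreatest (ends v) ℓ
  have hends (v : V) : ends v (height v) :=
    Nat.findGreatest_spec (P := ends v) (Nat.zero_le ℓ) ⟨fun _ => v, fun i => i.elim0, rfl⟩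
  have hstep {u v : V} (huv : E u v) : height u < height v := by
    obtain ⟨p, hp, hpu⟩ := hends u
    have hsnoc : ends v (height u + 1) := ⟨_, hp.snoc (by rwa [hpu]), Fin.snoc_last _ _⟩
    rcases (Nat.findGreatest_le ℓ : height u ≤ ℓ).lt_or_eq with hlt | heq
    · exact Nat.le_findGreatest hlt hsnoc
    · rw [show height u = ℓ from heq] at hsnoc
      obtain ⟨q, hq, -⟩ := hsnoc
      exact absurd ⟨q, hq⟩ hmax
  refine ⟨fun v => ⟨height v, Nat.lt_succ_of_le (Nat.findGreatest_le ℓ)⟩, fun u v huv => ?_⟩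
  induction huv with
  | single h => exact hstep h
  | tail _ h ih => exact ih.trans (hstep h)

end DirPath

theorem extremelyReduced_edge_bound_general {V : Type*} [Fintype V] (E : V → V → Prop) (n ℓ : ℕ)
    (hcard : Fintype.card V = n)
    (hacyc : ∀ v : V, ¬Relation.TransGen E v v)
    (hmax : ¬∃ p : Fin (ℓ + 1 + 1) → V, IsDirPath E (ℓ + 1) p)
    (her : ExtremelyReduced E) :
    edgeCount E ≤ turanEdges (n - ℓ + 1) 2 + intervalTuran n ℓ := by
  classical
  let _ : IsStrictOrder V (Relation.TransGen E) :=
    { irrefl := hacyc, trans := fun _ _ _ => Relation.TransGen.trans }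
  let _ : PartialOrder V := partialOrderOfSO (Relation.TransGen E)
  have hIcc (a b : V) : IsChain (· ≤ ·) (Set.Icc a b) := by
    rintro x ⟨hax, hxb⟩ y ⟨hay, hyb⟩ -
    by_contra! hxy
    refine her x y (fun e => hxy.1 (le_of_lt (Relation.TransGen.single e)))
      (fun e => hxy.2 (le_of_lt (Relation.TransGen.single e)))
      ⟨a, hax.lt_of_ne ?_, hay.lt_of_ne ?_⟩ ⟨b, hxb.lt_of_ne ?_, hyb.lt_of_ne ?_⟩
    all_goals rintro rfl; simp_all
  obtain ⟨h, hh⟩ := exists_height_of_not_isDirPath hmax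
  have hchain (s : Finset V) (hs : IsChain (· ≤ ·) (s : Set V)) : #s ≤ ℓ + 1 :=
    (hs.card_le_of_strictMono (f := h) hh).trans_eq (Fintype.card_fin _)
  have hedges : edgeCount E ≤ #{p ∈ univ ×ˢ univ | p.1 < p.2} :=
    card_le_card fun p hp => by
      simp only [mem_filter, mem_univ, mem_product, true_and] at hp ⊢
      exact Relation.TransGen.single hp
  have hpairs := card_filter_lt_add_choose_le hIcc hchain univ
  rw [card_univ, hcard] at hpairs
  unfold intervalTuran
  omega

theorem extremelyReduced_edge_bound {V : Type*} [Fintype V] (E : V → V → Prop) (n ℓ : ℕ)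
    (hcard : Fintype.card V = n)
    (hacyc : ∀ v : V, ¬Relation.TransGen E v v)
    (hℓ : 1 ≤ ℓ)
    (hlong : ∃ p : Fin (ℓ + 1) → V, IsDirPath E ℓ p)
    (hmax : ¬∃ p : Fin (ℓ + 1 + 1) → V, IsDirPath E (ℓ + 1) p)
    (her : ExtremelyReduced E) :
    edgeCount E ≤ turanEdges (n - ℓ + 1) 2 + intervalTuran n ℓ :=
  extremelyReduced_edge_bound_general E n ℓ hcard hacyc hmax her
end
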